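/- arXiv:2502.07530 — 3 statements merged into one kernel-verified Lean document; each statement's English description precedes it below -/
import Mathlib

section
/- Let n ≥ 1 be an integer and 0 < s < 1. For every τ > 0 and every y ∈ ℝⁿ with |y| ≥ 1 one has G(y,τ) ≤ exp(−|y|/(4nτ)) · Σ_{ε∈{−1,1}ⁿ} G(y+η_ε, τ). (Directional perturbation average estimate for the fully fractional heat kernel, part (i) of the key kernel lemma.) -/
open MeasureTheory Metric Set

noncomputable section

/-- ℝⁿ as a Euclidean space. -/
abbrev Euc (n : ℕ) : Type := EuclideanSpace ℝ (Fin n)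

/-- The fully fractional heat kernel
`G(z,τ) = C_{n,s} τ^{-(n/2+1-s)} exp(-|z|²/(4τ))` for `τ > 0`, and `0` for `τ ≤ 0`,
where `C_{n,s} = (4π)^{-n/2} |Γ(-s)|⁻¹`. -/
def fracHeatKernel (n : ℕ) (s : ℝ) (z : Euc n) (τ : ℝ) : ℝ :=
  if 0 < τ then
    (4 * Real.pi) ^ (-(n : ℝ) / 2) * |Real.Gamma (-s)|⁻¹ *
      τ ^ (-((n : ℝ) / 2 + 1 - s)) * Real.exp (-‖z‖ ^ 2 / (4 * τ))
  else 0

/-- For a sign vector `ε ∈ {-1,1}ⁿ` (encoded by `ε : Fin n → Bool`), the perturbation vector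
`η_ε = (1/n) ε ∈ ℝⁿ`, of norm `1/√n`. -/
def signPerturb (n : ℕ) (ε : Fin n → Bool) : Euc n :=
  (EuclideanSpace.equiv (Fin n) ℝ).symm fun i => (1 / (n : ℝ)) * (if ε i then 1 else -1)

/-!
Take the sign vector `ε` with `εᵢ = -sign yᵢ`. Then `⟪y, η_ε⟫ = -‖y‖₁/n ≤ -‖y‖/n` and
`‖η_ε‖² = 1/n`, so `‖y + η_ε‖² ≤ ‖y‖² - 2‖y‖/n + 1/n ≤ ‖y‖² - ‖y‖/n` once `‖y‖ ≥ 1`.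
Hence the single term `G(y + η_ε, τ)` of the sum already dominates `exp(‖y‖/(4nτ)) G(y, τ)`.
-/

lemma EuclideanSpace.norm_le_sum_abs {ι : Type*} [Fintype ι] (y : EuclideanSpace ℝ ι) :
    ‖y‖ ≤ ∑ i, |y i| := by
  rw [EuclideanSpace.norm_eq, Real.sqrt_le_left (by positivity)]
  simpa only [Real.norm_eq_abs] using
    Finset.sum_sq_le_sq_sum_of_nonneg fun i _ => abs_nonneg (y i)

lemma fracHeatKernel_nonneg (n : ℕ) (s : ℝ) (z : Euc n) (τ : ℝ) :
    0 ≤ fracHeatKernel n s z τ := by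
  unfold fracHeatKernel
  split_ifs
  · have := Real.pi_pos
    positivity
  · rfl

lemma fracHeatKernel_le_exp_mul_of_sq_norm_le {n : ℕ} {s c : ℝ} {z w : Euc n}
    (h : ‖w‖ ^ 2 + c ≤ ‖z‖ ^ 2) (τ : ℝ) :
    fracHeatKernel n s z τ ≤ Real.exp (-c / (4 * τ)) * fracHeatKernel n s w τ := by
  unfold fracHeatKernel
  split_ifs with hτ
  · have := Real.pi_pos
    have hexp : -‖z‖ ^ 2 / (4 * τ) ≤ -c / (4 * τ) + -‖w‖ ^ 2 / (4 * τ) := by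
      rw [← add_div]
      gcongr
      linarith
    rw [mul_left_comm (Real.exp _), ← Real.exp_add]
    gcongr
  · simp

lemma signPerturb_apply (n : ℕ) (ε : Fin n → Bool) (i : Fin n) :
    signPerturb n ε i = 1 / (n : ℝ) * (if ε i then 1 else -1) := by
  simp [signPerturb]

lemma norm_signPerturb_sq (n : ℕ) (ε : Fin n → Bool) :
    ‖signPerturb n ε‖ ^ 2 = 1 / (n : ℝ) := by
  have hcoord : ∀ i, signPerturb n ε i ^ 2 = 1 / (n : ℝ) ^ 2 := fun i => by
    rw [signPerturb_apply]
    split_ifs <;> ring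
  rw [EuclideanSpace.real_norm_sq_eq, Finset.sum_congr rfl fun i _ => hcoord i]
  simp only [Finset.sum_const, Finset.card_univ, Fintype.card_fin, nsmul_eq_mul]
  rcases n.eq_zero_or_pos with rfl | _
  · simp
  · field_simp

/-- `true` encodes the sign `+1`, so `signPerturb n (antiSign y)` points against `y`. -/
def antiSign {n : ℕ} (y : Euc n) : Fin n → Bool := fun i => decide (y i < 0)

lemma inner_signPerturb_antiSign {n : ℕ} (y : Euc n) :
    inner ℝ y (signPerturb n (antiSign y)) = -(1 / (n : ℝ)) * ∑ i, |y i| := by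
  rw [PiLp.inner_apply, Finset.mul_sum]
  refine Finset.sum_congr rfl fun i _ => ?_
  simp only [RCLike.inner_apply, conj_trivial, signPerturb_apply, antiSign, decide_eq_true_eq]
  split_ifs with h
  · rw [abs_of_neg h]; ring
  · rw [abs_of_nonneg (not_lt.mp h)]; ring

lemma sq_norm_add_signPerturb_antiSign_add_le {n : ℕ} {y : Euc n} (hy : 1 ≤ ‖y‖) :
    ‖y + signPerturb n (antiSign y)‖ ^ 2 + ‖y‖ / n ≤ ‖y‖ ^ 2 := by
  have hsum : ‖y‖ / n ≤ (∑ i, |y i|) / n := by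
    gcongr
    exact EuclideanSpace.norm_le_sum_abs y
  have hone : 1 / (n : ℝ) ≤ ‖y‖ / n := by gcongr
  rw [norm_add_sq_real, inner_signPerturb_antiSign, norm_signPerturb_sq]
  linarith [show -(1 / (n : ℝ)) * ∑ i, |y i| = -((∑ i, |y i|) / n) by ring]

theorem kernel_directional_perturbation_average_general
    (n : ℕ) (s : ℝ)
    (τ : ℝ) (y : Euc n) (hy : 1 ≤ ‖y‖) :
    fracHeatKernel n s y τ ≤
      Real.exp (-‖y‖ / (4 * (n : ℝ) * τ)) *
        ∑ ε : Fin n → Bool, fracHeatKernel n s (y + signPerturb n ε) τ := by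
  have hexponent : -‖y‖ / (4 * (n : ℝ) * τ) = -(‖y‖ / n) / (4 * τ) := by ring
  calc fracHeatKernel n s y τ
      ≤ Real.exp (-‖y‖ / (4 * (n : ℝ) * τ)) *
          fracHeatKernel n s (y + signPerturb n (antiSign y)) τ := by
        rw [hexponent]
        exact fracHeatKernel_le_exp_mul_of_sq_norm_le
          (sq_norm_add_signPerturb_antiSign_add_le hy) τ
    _ ≤ _ := by
        gcongr
        exact Finset.single_le_sum (f := fun ε => fracHeatKernel n s (y + signPerturb n ε) τ)
          (fun ε _ => fracHeatKernel_nonneg n s _ τ) (Finset.mem_univ _)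

/-- Directional perturbation average estimate for the fully fractional heat kernel:
for `τ > 0` and `|y| ≥ 1`,
`G(y,τ) ≤ exp(-|y|/(4nτ)) · Σ_{ε ∈ {-1,1}ⁿ} G(y + η_ε, τ)`. -/
theorem kernel_directional_perturbation_average
    (n : ℕ) (hn : 1 ≤ n) (s : ℝ) (hs0 : 0 < s) (hs1 : s < 1)
    (τ : ℝ) (hτ : 0 < τ) (y : Euc n) (hy : 1 ≤ ‖y‖) :
    fracHeatKernel n s y τ ≤
      Real.exp (-‖y‖ / (4 * (n : ℝ) * τ)) *
        ∑ ε : Fin n → Bool, fracHeatKernel n s (y + signPerturb n ε) τ :=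
  kernel_directional_perturbation_average_general n s τ y hy

end
end

section
/- Let n ≥ 1 be an integer and 0 < s < 1. There exists a constant C depending only on n and s such that for every τ > 0 and every y ∈ ℝⁿ with |y| ≥ 1, the time derivative of the fully fractional heat kernel satisfies |∂_τ G(y,τ)| ≤ C Σ_{ε∈{−1,1}ⁿ} G(y+η_ε, τ). -/
open MeasureTheory Metric Set

noncomputable section

/-! For `τ > 0`, `∂_τ G(y,τ) = G(y,τ) (|y|²/(4τ²) - (n/2+1-s)/τ)`, and since `|y| ≥ 1` the
factor is bounded by a quadratic polynomial in `x = |y|/τ`. Shifting `y` by `η_ε`, with `ε` the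
signs opposite to those of the coordinates of `y`, lowers `|y|²` by at least `|y|/n`, so
`G(y + η_ε, τ) ≥ G(y,τ) e^{x/(4n)}`, and the exponential absorbs the polynomial. -/

lemma hasDerivAt_rpow_neg_mul_exp_neg_div {a b τ : ℝ} (hτ : 0 < τ) :
    HasDerivAt (fun t : ℝ => t ^ (-a) * Real.exp (-b / (4 * t)))
      (τ ^ (-a) * Real.exp (-b / (4 * τ)) * (b / (4 * τ ^ 2) - a / τ)) τ := by
  have hpow : HasDerivAt (fun t : ℝ => t ^ (-a)) (-a * τ ^ (-a - 1)) τ :=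
    Real.hasDerivAt_rpow_const (Or.inl hτ.ne')
  have hinv : HasDerivAt (fun t : ℝ => -b / (4 * t)) (b / (4 * τ ^ 2)) τ := by
    refine ((hasDerivAt_const τ (-b)).div ((hasDerivAt_id τ).const_mul 4)
      (by simp [hτ.ne'])).congr_deriv ?_
    simp only [id]
    field_simp
    ring
  refine (hpow.mul hinv.exp).congr_deriv ?_
  rw [Real.rpow_sub_one hτ.ne']
  field_simp
  ring

theorem hasDerivAt_fracHeatKernel (n : ℕ) (s : ℝ) (z : Euc n) {τ : ℝ} (hτ : 0 < τ) :
    HasDerivAt (fracHeatKernel n s z)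
      (fracHeatKernel n s z τ * (‖z‖ ^ 2 / (4 * τ ^ 2) - ((n : ℝ) / 2 + 1 - s) / τ)) τ := by
  refine ((hasDerivAt_rpow_neg_mul_exp_neg_div (a := (n : ℝ) / 2 + 1 - s) (b := ‖z‖ ^ 2)
    hτ).const_mul ((4 * Real.pi) ^ (-(n : ℝ) / 2) * |Real.Gamma (-s)|⁻¹)).congr_of_eventuallyEq
    ?_ |>.congr_deriv ?_
  · filter_upwards [eventually_gt_nhds hτ] with t ht
    simp only [fracHeatKernel, if_pos ht]
    ring
  · simp only [fracHeatKernel, if_pos hτ]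
    ring

lemma fracHeatKernel_mul_exp_le {n : ℕ} {s : ℝ} {y z : Euc n} {δ : ℝ} (τ : ℝ)
    (h : ‖z‖ ^ 2 ≤ ‖y‖ ^ 2 - δ) :
    fracHeatKernel n s y τ * Real.exp (δ / (4 * τ)) ≤ fracHeatKernel n s z τ := by
  unfold fracHeatKernel
  split_ifs with hτ
  · rw [mul_assoc, ← Real.exp_add, ← add_div]
    gcongr
    linarith
  · simp

lemma norm_add_signPerturb_sq_le {n : ℕ} {y : Euc n} (hy : 1 ≤ ‖y‖) :
    ‖y + signPerturb n (fun i => decide (y i < 0))‖ ^ 2 ≤ ‖y‖ ^ 2 - ‖y‖ / n := by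
  have hcoord : ∀ i, (y + signPerturb n (fun i => decide (y i < 0))) i ^ 2 =
      y i ^ 2 - 2 / n * |y i| + 1 / (n : ℝ) ^ 2 := by
    intro i
    change (y i + 1 / (n : ℝ) * (if decide (y i < 0) then 1 else -1)) ^ 2 = _
    rcases lt_or_ge (y i) 0 with h | h
    · simp only [h, decide_true, if_true, abs_of_neg h]
      ring
    · simp only [h.not_gt, decide_false, Bool.false_eq_true, if_false, abs_of_nonneg h]
      ring
  have hsum : ‖y + signPerturb n (fun i => decide (y i < 0))‖ ^ 2 =
      ‖y‖ ^ 2 - 2 / n * ∑ i, |y i| + n * (1 / (n : ℝ) ^ 2) := by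
    simp only [EuclideanSpace.real_norm_sq_eq, hcoord, Finset.sum_add_distrib,
      Finset.sum_sub_distrib, ← Finset.mul_sum, Finset.sum_const, Finset.card_univ,
      Fintype.card_fin, nsmul_eq_mul]
  have hconst : (n : ℝ) * (1 / (n : ℝ) ^ 2) = 1 / n := by
    rcases eq_or_ne (n : ℝ) 0 with h0 | h0
    · simp [h0]
    · field_simp
  have hl1 : 2 * (‖y‖ / n) ≤ 2 / n * ∑ i, |y i| := by
    rw [mul_div, mul_div_right_comm]
    gcongr
    exact EuclideanSpace.norm_le_sum_abs y
  have hone : 1 / (n : ℝ) ≤ ‖y‖ / n := by gcongr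
  linarith

lemma sq_div_four_add_mul_le_mul_exp {m A x : ℝ} (hm : 0 < m) (hA : 0 ≤ A) (hx : 0 ≤ x) :
    x ^ 2 / 4 + A * x ≤ (8 * m ^ 2 + 4 * m * A) * Real.exp (x / (4 * m)) := by
  set w := x / (4 * m) with hw
  have hw0 : 0 ≤ w := by positivity
  have hxw : x = 4 * m * w := by
    rw [hw]
    field_simp
  have hlin : w ≤ Real.exp w := by linarith [Real.add_one_le_exp w]
  have hquad : w ^ 2 / 2 ≤ Real.exp w := by simpa using Real.pow_div_factorial_le_exp w hw0 2
  rw [hxw]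
  nlinarith [mul_le_mul_of_nonneg_left hlin (by positivity : 0 ≤ 4 * m * A),
    mul_le_mul_of_nonneg_left hquad (by positivity : 0 ≤ 8 * m ^ 2)]

theorem kernel_time_derivative_estimate_general
    (n : ℕ) (hn : 1 ≤ n) (s : ℝ) :
    ∃ C : ℝ, 0 < C ∧ ∀ τ : ℝ, 0 < τ → ∀ y : Euc n, 1 ≤ ‖y‖ →
      |deriv (fun t => fracHeatKernel n s y t) τ| ≤
        C * ∑ ε : Fin n → Bool, fracHeatKernel n s (y + signPerturb n ε) τ := by
  have hn0 : (0 : ℝ) < n := by exact_mod_cast hn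
  set a : ℝ := (n : ℝ) / 2 + 1 - s
  refine ⟨8 * n ^ 2 + 4 * n * |a|, by positivity, fun τ hτ y hy => ?_⟩
  have hG := fracHeatKernel_nonneg n s y τ
  have hrate : |‖y‖ ^ 2 / (4 * τ ^ 2) - a / τ| ≤ (‖y‖ / τ) ^ 2 / 4 + |a| * (‖y‖ / τ) :=
    calc |‖y‖ ^ 2 / (4 * τ ^ 2) - a / τ| ≤ |‖y‖ ^ 2 / (4 * τ ^ 2)| + |a / τ| := abs_sub _ _
      _ = (‖y‖ / τ) ^ 2 / 4 + |a| * (1 / τ) := by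
        rw [abs_of_nonneg (by positivity), abs_div, abs_of_pos hτ]
        ring
      _ ≤ (‖y‖ / τ) ^ 2 / 4 + |a| * (‖y‖ / τ) := by gcongr
  calc |deriv (fun t => fracHeatKernel n s y t) τ|
      = fracHeatKernel n s y τ * |‖y‖ ^ 2 / (4 * τ ^ 2) - a / τ| := by
        rw [(hasDerivAt_fracHeatKernel n s y hτ).deriv, abs_mul, abs_of_nonneg hG]
    _ ≤ fracHeatKernel n s y τ *
        ((8 * n ^ 2 + 4 * n * |a|) * Real.exp (‖y‖ / τ / (4 * n))) := by
        gcongr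
        exact hrate.trans (sq_div_four_add_mul_le_mul_exp hn0 (abs_nonneg a) (by positivity))
    _ = (8 * n ^ 2 + 4 * n * |a|) *
        (fracHeatKernel n s y τ * Real.exp (‖y‖ / n / (4 * τ))) := by
        rw [show ‖y‖ / τ / (4 * n) = ‖y‖ / n / (4 * τ) by ring]
        ring
    _ ≤ (8 * n ^ 2 + 4 * n * |a|) *
        fracHeatKernel n s (y + signPerturb n (fun i => decide (y i < 0))) τ := by
        gcongr
        exact fracHeatKernel_mul_exp_le τ (norm_add_signPerturb_sq_le hy)
    _ ≤ _ := by
        gcongr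
        exact Finset.single_le_sum (f := fun ε => fracHeatKernel n s (y + signPerturb n ε) τ)
          (fun ε _ => fracHeatKernel_nonneg n s _ τ) (Finset.mem_univ _)

/-- There exists `C = C(n,s)` such that for every `τ > 0` and every `y` with `|y| ≥ 1`,
the time derivative of the fully fractional heat kernel satisfies
`|∂_τ G(y,τ)| ≤ C Σ_{ε ∈ {-1,1}ⁿ} G(y+η_ε,τ)`. -/
theorem kernel_time_derivative_estimate
    (n : ℕ) (hn : 1 ≤ n) (s : ℝ) (hs0 : 0 < s) (hs1 : s < 1) :
    ∃ C : ℝ, 0 < C ∧ ∀ τ : ℝ, 0 < τ → ∀ y : Euc n, 1 ≤ ‖y‖ →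
      |deriv (fun t => fracHeatKernel n s y t) τ| ≤
        C * ∑ ε : Fin n → Bool, fracHeatKernel n s (y + signPerturb n ε) τ :=
  kernel_time_derivative_estimate_general n hn s

end
end

section
/- Let n ≥ 2 be an integer and 0 < s < 1, and let f and v be as in the homogeneous-part setting. Then there exists a constant C depending only on n and s such that for every x ∈ B₁(0) and all t, t̄ ∈ (1,2), |v(x,t) − v(x,t̄)| ≤ C · ‖v‖_{L∞(Q)} · |t − t̄|; in particular, for every α ∈ (0,1), t ↦ v(x,t) is α-Hölder continuous on (1,2) with Hölder constant at most C·‖v‖_{L∞(Q)}. -/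
open MeasureTheory Metric Set

noncomputable section

/-! Write `G(z, σ) = c · k(σ)` with the time profile `k(σ) = σ^(-a) e^(-b/σ)`, `a = n/2 + 1 - s`,
`b = |z|²/4`. For `(y, τ)` outside `Q`, `x ∈ B₁` and `t ∈ (1, 2)`, the times `σ = t - τ` lie
at distance between `1/2` and `3/2` below `σ₀ = 5/2 - τ`, and either `σ ≤ 0` (`τ ≥ 3`), or
`σ ≥ 1` (`τ ≤ 0`), or `b ≥ 1/4` (`|y| ≥ 2`). Since
`k(ξ) = (σ₀/ξ)^a e^(-b(1/ξ - 1/σ₀)) k(σ₀)`, in the last two cases the exponential gain absorbs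
the factor `1/ξ + b/ξ²` that bounds `|k'(ξ)| / k(ξ)`, so `|k(σ) - k(σ')| ≤ C |σ - σ'| k(σ₀)`
(by the mean value theorem, or directly when `σ' ≤ 0 < σ`). Multiplying by `f ≥ 0` and integrating gives
`|v(x,t) - v(x,t')| ≤ C |t - t'| v(x, 5/2) ≤ C M |t - t'|`. -/

open Real

lemma rpow_mul_exp_neg_le {x r : ℝ} (hx : 0 ≤ x) (hr : 0 < r) : x ^ r * exp (-x) ≤ r ^ r := by
  have hxr : (x / r) ^ r ≤ exp x :=
    calc (x / r) ^ r ≤ exp (x / r) ^ r :=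
          rpow_le_rpow (by positivity) (by linarith [add_one_le_exp (x / r)]) hr.le
      _ = exp x := by rw [← exp_mul, div_mul_cancel₀ x hr.ne']
  rw [div_rpow hx hr.le, div_le_iff₀ (by positivity)] at hxr
  calc x ^ r * exp (-x) ≤ exp x * r ^ r * exp (-x) := by gcongr
    _ = r ^ r := by rw [mul_right_comm, ← exp_add, add_neg_cancel, exp_zero, one_mul]

lemma rpow_mul_exp_neg_mul_le {u r c : ℝ} (hu : 0 ≤ u) (hr : 0 < r) (hc : 0 < c) :
    u ^ r * exp (-(c * u)) ≤ (r / c) ^ r := by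
  have h := rpow_mul_exp_neg_le (mul_nonneg hc.le hu) hr
  rw [mul_rpow hc.le hu, mul_assoc, ← le_div_iff₀' (by positivity)] at h
  rwa [div_rpow hr.le hc.le]

lemma mul_exp_neg_mul_le {w c : ℝ} (hw : 0 ≤ w) (hc : 0 < c) : w * exp (-(c * w)) ≤ c⁻¹ := by
  simpa using rpow_mul_exp_neg_mul_le hw one_pos hc

def heatProfile (a b σ : ℝ) : ℝ := if 0 < σ then σ ^ (-a) * exp (-b / σ) else 0

lemma heatProfile_of_pos {a b σ : ℝ} (hσ : 0 < σ) : heatProfile a b σ = σ ^ (-a) * exp (-b / σ) :=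
  if_pos hσ

lemma heatProfile_of_nonpos {a b σ : ℝ} (hσ : σ ≤ 0) : heatProfile a b σ = 0 :=
  if_neg hσ.not_gt

lemma heatProfile_nonneg (a b σ : ℝ) : 0 ≤ heatProfile a b σ := by
  unfold heatProfile; split_ifs <;> positivity

lemma hasDerivAt_heatProfile (a b : ℝ) {σ : ℝ} (hσ : 0 < σ) :
    HasDerivAt (heatProfile a b) ((b / σ ^ 2 - a / σ) * heatProfile a b σ) σ := by
  have hEq : (fun ξ => ξ ^ (-a) * exp (-b * ξ⁻¹)) =ᶠ[nhds σ] heatProfile a b := by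
    filter_upwards [eventually_gt_nhds hσ] with ξ hξ
    rw [heatProfile_of_pos hξ, div_eq_mul_inv]
  have h := ((hasDerivAt_rpow_const (p := -a) (Or.inl hσ.ne')).mul
    ((hasDerivAt_inv hσ.ne').const_mul (-b)).exp).congr_of_eventuallyEq hEq.symm
  refine h.congr_deriv ?_
  rw [heatProfile_of_pos hσ, rpow_sub_one hσ.ne', div_eq_mul_inv (-b)]
  field_simp
  ring

def profileRatio (a b ξ σ₀ : ℝ) : ℝ := (σ₀ / ξ) ^ a * exp (-(b * (1 / ξ - 1 / σ₀)))

lemma heatProfile_eq_profileRatio_mul {a b ξ σ₀ : ℝ} (hξ : 0 < ξ) (hσ₀ : 0 < σ₀) :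
    heatProfile a b ξ = profileRatio a b ξ σ₀ * heatProfile a b σ₀ := by
  have hexp : exp (-b / ξ) = exp (-(b * (1 / ξ - 1 / σ₀))) * exp (-b / σ₀) := by
    rw [← exp_add]; ring_nf
  have hpow : ξ ^ (-a) = (σ₀ / ξ) ^ a * σ₀ ^ (-a) := by
    rw [div_rpow hσ₀.le hξ.le, rpow_neg hξ.le, rpow_neg hσ₀.le,
      div_mul_eq_mul_div, mul_inv_cancel₀ (rpow_pos_of_pos hσ₀ a).ne', one_div]
  rw [heatProfile_of_pos hξ, heatProfile_of_pos hσ₀, hexp, hpow, profileRatio]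
  ring

lemma one_div_two_mul_mul_le_one_div_sub_one_div {ξ σ₀ : ℝ} (hξ : 0 < ξ) (h : ξ + 1 / 2 ≤ σ₀) :
    1 / (2 * (ξ * σ₀)) ≤ 1 / ξ - 1 / σ₀ := by
  have hσ₀ : 0 < σ₀ := by linarith
  rw [div_sub_div _ _ hξ.ne' hσ₀.ne', div_le_div_iff₀ (by positivity) (by positivity)]
  nlinarith [mul_pos hξ hσ₀]

lemma weighted_profileRatio_le_of_one_le {a b ξ σ₀ : ℝ} (ha : 0 ≤ a) (hb : 0 ≤ b) (hξ : 1 ≤ ξ)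
    (h₁ : ξ + 1 / 2 ≤ σ₀) (h₂ : σ₀ ≤ ξ + 3 / 2) :
    (1 / ξ + b / ξ ^ 2) * profileRatio a b ξ σ₀ ≤ 6 * (5 / 2) ^ a := by
  rw [profileRatio]
  have hξ0 : 0 < ξ := by linarith
  have hσ₀ : 0 < σ₀ := by linarith
  set w := b / ξ ^ 2
  have hratio : (σ₀ / ξ) ^ a ≤ (5 / 2) ^ a :=
    rpow_le_rpow (by positivity) (by rw [div_le_iff₀ hξ0]; linarith) ha
  have hgap : 1 / 5 * w ≤ b * (1 / ξ - 1 / σ₀) := by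
    refine le_trans ?_ (mul_le_mul_of_nonneg_left
      (one_div_two_mul_mul_le_one_div_sub_one_div hξ0 h₁) hb)
    rw [show 1 / 5 * w = b * (1 / (5 * ξ ^ 2)) by ring]
    exact mul_le_mul_of_nonneg_left (one_div_le_one_div_of_le (by positivity) (by nlinarith)) hb
  have hw : w * exp (-(1 / 5 * w)) ≤ 5 := by
    simpa using mul_exp_neg_mul_le (by positivity : 0 ≤ w) (by norm_num : (0 : ℝ) < 1 / 5)
  have hexp : exp (-(1 / 5 * w)) ≤ 1 := exp_le_one_iff.2 (by simp only [neg_nonpos]; positivity)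
  calc (1 / ξ + w) * ((σ₀ / ξ) ^ a * exp (-(b * (1 / ξ - 1 / σ₀))))
      ≤ (1 + w) * ((5 / 2) ^ a * exp (-(1 / 5 * w))) := by
        gcongr
        exact div_le_one_of_le₀ hξ hξ0.le
    _ = (5 / 2) ^ a * (exp (-(1 / 5 * w)) + w * exp (-(1 / 5 * w))) := by ring
    _ ≤ (5 / 2) ^ a * (1 + 5) := by gcongr
    _ = 6 * (5 / 2) ^ a := by ring

lemma weighted_profileRatio_le_of_le_one {a b ξ σ₀ : ℝ} (ha : 0 ≤ a) (hb : 1 / 4 ≤ b)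
    (hξ0 : 0 < ξ) (hξ : ξ ≤ 1) (h₁ : ξ + 1 / 2 ≤ σ₀) (h₂ : σ₀ ≤ ξ + 3 / 2) :
    (1 / ξ + b / ξ ^ 2) * profileRatio a b ξ σ₀ ≤ 11 * (5 / 2) ^ a * (40 * (a + 1)) ^ (a + 1) := by
  rw [profileRatio]
  have hσ₀ : 0 < σ₀ := by linarith
  set u := 1 / ξ with hu
  have hu0 : 0 < u := by positivity
  have hratio : (σ₀ / ξ) ^ a ≤ (5 / 2) ^ a * u ^ a := by
    rw [← mul_rpow (by norm_num) hu0.le, div_eq_mul_one_div]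
    exact rpow_le_rpow (by positivity) (by gcongr; linarith) ha
  have hgap : 1 / 10 * (b * u) + 1 / 40 * u ≤ b * (1 / ξ - 1 / σ₀) := by
    refine le_trans ?_ (mul_le_mul_of_nonneg_left
      (one_div_two_mul_mul_le_one_div_sub_one_div hξ0 h₁) (by linarith))
    have : u / 5 ≤ 1 / (2 * (ξ * σ₀)) := by
      rw [hu, div_div, div_le_div_iff₀ (by positivity) (by positivity)]
      nlinarith
    nlinarith
  have hbu : b * u * exp (-(1 / 10 * (b * u))) ≤ 10 := by
    simpa using mul_exp_neg_mul_le (by positivity : 0 ≤ b * u) (by norm_num : (0 : ℝ) < 1 / 10)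
  have htail : u ^ (a + 1) * exp (-(1 / 40 * u)) ≤ (40 * (a + 1)) ^ (a + 1) := by
    simpa [div_eq_mul_inv, mul_comm] using
      rpow_mul_exp_neg_mul_le hu0.le (by linarith : 0 < a + 1) (by norm_num : (0 : ℝ) < 1 / 40)
  have hexp : exp (-(1 / 10 * (b * u))) ≤ 1 :=
    exp_le_one_iff.2 (by simp only [neg_nonpos]; positivity)
  calc (1 / ξ + b / ξ ^ 2) * ((σ₀ / ξ) ^ a * exp (-(b * (1 / ξ - 1 / σ₀))))
      ≤ u * (1 + b * u) * ((5 / 2) ^ a * u ^ a *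
          (exp (-(1 / 10 * (b * u))) * exp (-(1 / 40 * u)))) := by
        rw [← exp_add]
        gcongr
        · exact le_of_eq (by rw [hu]; ring)
        · linarith
    _ = (5 / 2) ^ a * (exp (-(1 / 10 * (b * u))) + b * u * exp (-(1 / 10 * (b * u)))) *
          (u ^ (a + 1) * exp (-(1 / 40 * u))) := by
        rw [rpow_add_one hu0.ne']; ring
    _ ≤ (5 / 2) ^ a * (1 + 10) * (40 * (a + 1)) ^ (a + 1) := by gcongr
    _ = 11 * (5 / 2) ^ a * (40 * (a + 1)) ^ (a + 1) := by ring

def profileConst (a : ℝ) : ℝ := 11 * (5 / 2) ^ a * (1 + (40 * (a + 1)) ^ (a + 1))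

lemma profileConst_pos {a : ℝ} (ha : 0 ≤ a) : 0 < profileConst a := by
  unfold profileConst; positivity

lemma weighted_heatProfile_le {a b ξ σ₀ : ℝ} (ha : 0 ≤ a) (hb : 0 ≤ b) (hξ : 0 < ξ)
    (h₁ : ξ + 1 / 2 ≤ σ₀) (h₂ : σ₀ ≤ ξ + 3 / 2) (hside : 1 ≤ ξ ∨ 1 / 4 ≤ b) :
    (1 / ξ + b / ξ ^ 2) * heatProfile a b ξ ≤ profileConst a * heatProfile a b σ₀ := by
  rw [heatProfile_eq_profileRatio_mul hξ (by linarith), ← mul_assoc]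
  refine mul_le_mul_of_nonneg_right ?_ (heatProfile_nonneg a b σ₀)
  have h5 : 0 < (5 / 2 : ℝ) ^ a := by positivity
  have hX : 0 ≤ (40 * (a + 1)) ^ (a + 1) := by positivity
  unfold profileConst
  rcases le_or_gt 1 ξ with hξ1 | hξ1
  · nlinarith [weighted_profileRatio_le_of_one_le ha hb hξ1 h₁ h₂]
  · have hb4 : 1 / 4 ≤ b := hside.resolve_left hξ1.not_ge
    nlinarith [weighted_profileRatio_le_of_le_one ha hb4 hξ hξ1.le h₁ h₂]

lemma heatProfile_le_mul_self {a b σ σ₀ : ℝ} (ha : 0 ≤ a) (hb : 1 / 4 ≤ b) (hσ : 0 < σ)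
    (h₁ : σ + 1 / 2 ≤ σ₀) (h₂ : σ₀ ≤ σ + 3 / 2) :
    heatProfile a b σ ≤ profileConst a * σ * heatProfile a b σ₀ := by
  have hweight : 1 / σ * heatProfile a b σ ≤ (1 / σ + b / σ ^ 2) * heatProfile a b σ :=
    mul_le_mul_of_nonneg_right (le_add_of_nonneg_right (by positivity)) (heatProfile_nonneg a b σ)
  calc heatProfile a b σ = σ * (1 / σ * heatProfile a b σ) := by field_simp
    _ ≤ σ * (profileConst a * heatProfile a b σ₀) := mul_le_mul_of_nonneg_left
        (hweight.trans (weighted_heatProfile_le ha (by linarith) hσ h₁ h₂ (Or.inr hb))) hσ.le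
    _ = profileConst a * σ * heatProfile a b σ₀ := by ring

lemma abs_deriv_heatProfile_le {a b ξ σ₀ : ℝ} (ha : 0 ≤ a) (hb : 0 ≤ b) (hξ : 0 < ξ)
    (h₁ : ξ + 1 / 2 ≤ σ₀) (h₂ : σ₀ ≤ ξ + 3 / 2) (hside : 1 ≤ ξ ∨ 1 / 4 ≤ b) :
    |(b / ξ ^ 2 - a / ξ) * heatProfile a b ξ| ≤ (1 + a) * profileConst a * heatProfile a b σ₀ := by
  have hcoef : |b / ξ ^ 2 - a / ξ| ≤ (1 + a) * (1 / ξ + b / ξ ^ 2) := by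
    have h1 : 0 ≤ 1 / ξ := by positivity
    have h2 : 0 ≤ b / ξ ^ 2 := by positivity
    have h3 : a / ξ = a * (1 / ξ) := by ring
    exact abs_le.2 ⟨by nlinarith, by nlinarith⟩
  rw [abs_mul, abs_of_nonneg (heatProfile_nonneg a b ξ), mul_assoc]
  calc |b / ξ ^ 2 - a / ξ| * heatProfile a b ξ
      ≤ (1 + a) * ((1 / ξ + b / ξ ^ 2) * heatProfile a b ξ) := by
        rw [← mul_assoc]
        exact mul_le_mul_of_nonneg_right hcoef (heatProfile_nonneg a b ξ)
    _ ≤ (1 + a) * (profileConst a * heatProfile a b σ₀) :=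
        mul_le_mul_of_nonneg_left (weighted_heatProfile_le ha hb hξ h₁ h₂ hside) (by linarith)

lemma abs_heatProfile_sub_le {a b σ σ' σ₀ : ℝ} (ha : 0 ≤ a) (hb : 0 ≤ b)
    (h₁ : σ + 1 / 2 ≤ σ₀) (h₂ : σ₀ ≤ σ + 3 / 2) (h₁' : σ' + 1 / 2 ≤ σ₀) (h₂' : σ₀ ≤ σ' + 3 / 2)
    (hside : (σ ≤ 0 ∧ σ' ≤ 0) ∨ (1 ≤ σ ∧ 1 ≤ σ') ∨ 1 / 4 ≤ b) :
    |heatProfile a b σ - heatProfile a b σ'| ≤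
      (1 + a) * profileConst a * |σ - σ'| * heatProfile a b σ₀ := by
  wlog hle : σ' ≤ σ generalizing σ σ'
  · rw [abs_sub_comm, abs_sub_comm σ]
    exact this h₁' h₂' h₁ h₂ (by tauto) (le_of_not_ge hle)
  have hK := (profileConst_pos ha).le
  have hk₀ := heatProfile_nonneg a b σ₀
  rcases le_or_gt σ 0 with hσ | hσ
  · rw [heatProfile_of_nonpos hσ, heatProfile_of_nonpos (hle.trans hσ), sub_self, abs_zero]
    positivity
  rcases le_or_gt σ' 0 with hσ' | hσ'
  · have hb4 : 1 / 4 ≤ b := by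
      rcases hside with h | h | h
      · linarith [h.1]
      · linarith [h.2]
      · exact h
    rw [heatProfile_of_nonpos hσ', sub_zero, abs_of_nonneg (heatProfile_nonneg a b σ)]
    calc heatProfile a b σ ≤ profileConst a * σ * heatProfile a b σ₀ :=
          heatProfile_le_mul_self ha hb4 hσ h₁ h₂
      _ ≤ (1 + a) * profileConst a * |σ - σ'| * heatProfile a b σ₀ := by
          gcongr ?_ * ?_ * _
          · exact le_mul_of_one_le_left hK (by linarith)
          · rw [abs_of_nonneg (by linarith)]; linarith
  · have hbound : ∀ ξ ∈ Icc σ' σ, ‖(b / ξ ^ 2 - a / ξ) * heatProfile a b ξ‖ ≤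
        (1 + a) * profileConst a * heatProfile a b σ₀ := by
      intro ξ hξ
      refine abs_deriv_heatProfile_le ha hb (hσ'.trans_le hξ.1) (by linarith [hξ.2])
        (by linarith [hξ.1]) ?_
      rcases hside with h | h | h
      · linarith [h.1]
      · exact Or.inl (h.2.trans hξ.1)
      · exact Or.inr h
    have hmvt := Convex.norm_image_sub_le_of_norm_hasDerivWithin_le
      (fun ξ hξ => (hasDerivAt_heatProfile a b (hσ'.trans_le hξ.1)).hasDerivWithinAt)
      hbound (convex_Icc σ' σ) (left_mem_Icc.2 hle) (right_mem_Icc.2 hle)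
    simpa only [Real.norm_eq_abs, mul_right_comm _ |σ - σ'|] using hmvt

lemma fracHeatKernel_eq_mul_heatProfile (n : ℕ) (s : ℝ) (z : Euc n) (τ : ℝ) :
    fracHeatKernel n s z τ = (4 * π) ^ (-(n : ℝ) / 2) * |Gamma (-s)|⁻¹ *
      heatProfile ((n : ℝ) / 2 + 1 - s) (‖z‖ ^ 2 / 4) τ := by
  unfold fracHeatKernel heatProfile
  split_ifs
  · rw [show -‖z‖ ^ 2 / (4 * τ) = -(‖z‖ ^ 2 / 4) / τ by ring]; ring
  · rw [mul_zero]

def timeLipConst (n : ℕ) (s : ℝ) : ℝ :=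
  (1 + ((n : ℝ) / 2 + 1 - s)) * profileConst ((n : ℝ) / 2 + 1 - s)

lemma kernelExponent_nonneg (n : ℕ) {s : ℝ} (hs : s < 1) : 0 ≤ (n : ℝ) / 2 + 1 - s := by
  have := n.cast_nonneg (α := ℝ)
  linarith

lemma timeLipConst_pos (n : ℕ) {s : ℝ} (hs : s < 1) : 0 < timeLipConst n s :=
  mul_pos (by linarith [kernelExponent_nonneg n hs]) (profileConst_pos (kernelExponent_nonneg n hs))

lemma abs_fracHeatKernel_sub_le {n : ℕ} {s : ℝ} (hs : s < 1) {x y : Euc n} {t t' τ : ℝ}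
    (hx : ‖x‖ < 1) (ht : t ∈ Ioo 1 2) (ht' : t' ∈ Ioo 1 2) (hyτ : ¬(‖y‖ < 2 ∧ τ ∈ Ioo 0 3)) :
    |fracHeatKernel n s (x - y) (t - τ) - fracHeatKernel n s (x - y) (t' - τ)| ≤
      timeLipConst n s * |t - t'| * fracHeatKernel n s (x - y) (5 / 2 - τ) := by
  obtain ⟨ht₁, ht₂⟩ := ht
  obtain ⟨ht₁', ht₂'⟩ := ht'
  have hside : (t - τ ≤ 0 ∧ t' - τ ≤ 0) ∨ (1 ≤ t - τ ∧ 1 ≤ t' - τ) ∨ 1 / 4 ≤ ‖x - y‖ ^ 2 / 4 := by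
    by_cases hy : ‖y‖ < 2
    · have hτ : τ ≤ 0 ∨ 3 ≤ τ := by
        by_contra! h
        exact hyτ ⟨hy, h.1, h.2⟩
      rcases hτ with hτ | hτ
      · exact Or.inr (Or.inl ⟨by linarith, by linarith⟩)
      · exact Or.inl ⟨by linarith, by linarith⟩
    · have : 1 ≤ ‖x - y‖ := by linarith [norm_sub_norm_le y x, norm_sub_rev y x]
      exact Or.inr (Or.inr (by nlinarith))
  have hprofile := abs_heatProfile_sub_le (σ₀ := 5 / 2 - τ) (kernelExponent_nonneg n hs)
    (by positivity) (by linarith) (by linarith) (by linarith) (by linarith) hside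
  rw [sub_sub_sub_cancel_right] at hprofile
  have hc : 0 ≤ (4 * π) ^ (-(n : ℝ) / 2) * |Gamma (-s)|⁻¹ := by positivity
  simp only [fracHeatKernel_eq_mul_heatProfile]
  rw [← mul_sub, abs_mul, abs_of_nonneg hc, timeLipConst]
  calc _ ≤ _ := mul_le_mul_of_nonneg_left hprofile hc
    _ = _ := by ring

lemma abs_mul_fracHeatKernel_sub_le {n : ℕ} {s : ℝ} (hs : s < 1) {f : Euc n → ℝ → ℝ}
    (hf0 : ∀ y τ, 0 ≤ f y τ) (hfQ : ∀ y τ, ‖y‖ < 2 → τ ∈ Ioo (0 : ℝ) 3 → f y τ = 0)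
    {x : Euc n} (hx : ‖x‖ < 1) {t t' : ℝ} (ht : t ∈ Ioo 1 2) (ht' : t' ∈ Ioo 1 2)
    (y : Euc n) (τ : ℝ) :
    |f y τ * fracHeatKernel n s (x - y) (t - τ) - f y τ * fracHeatKernel n s (x - y) (t' - τ)| ≤
      timeLipConst n s * |t - t'| * (f y τ * fracHeatKernel n s (x - y) (5 / 2 - τ)) := by
  by_cases hyτ : ‖y‖ < 2 ∧ τ ∈ Ioo 0 3
  · simp [hfQ y τ hyτ.1 hyτ.2]
  · rw [← mul_sub, abs_mul, abs_of_nonneg (hf0 y τ), mul_left_comm]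
    exact mul_le_mul_of_nonneg_left (abs_fracHeatKernel_sub_le hs hx ht ht' hyτ) (hf0 y τ)

lemma abs_integral_sub_le_mul_integral {α : Type*} [MeasurableSpace α] {μ : Measure α}
    {g₁ g₂ h : α → ℝ} {c : ℝ} (hg₁ : Integrable g₁ μ) (hg₂ : Integrable g₂ μ)
    (hh : Integrable h μ) (hle : ∀ p, |g₁ p - g₂ p| ≤ c * h p) :
    |∫ p, g₁ p ∂μ - ∫ p, g₂ p ∂μ| ≤ c * ∫ p, h p ∂μ := by
  rw [← integral_sub hg₁ hg₂, ← integral_const_mul]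
  calc |∫ p, g₁ p - g₂ p ∂μ| ≤ ∫ p, |g₁ p - g₂ p| ∂μ := by
        simpa only [Real.norm_eq_abs] using norm_integral_le_integral_norm (fun p => g₁ p - g₂ p)
    _ ≤ ∫ p, c * h p ∂μ := integral_mono (hg₁.sub hg₂).abs (hh.const_mul c) hle

theorem homogeneous_part_time_regularity_general
    (n : ℕ) (s : ℝ) (hs1 : s < 1) :
    ∃ C : ℝ, 0 < C ∧ ∀ f v : Euc n → ℝ → ℝ,
      Measurable (Function.uncurry f) →
      (∀ y τ, 0 ≤ f y τ) →
      (∀ y τ, ‖y‖ < 2 → τ ∈ Set.Ioo (0 : ℝ) 3 → f y τ = 0) →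
      (∀ x t, ‖x‖ < 2 → t ∈ Set.Ioo (0 : ℝ) 3 →
        Integrable (fun p : Euc n × ℝ =>
          f p.1 p.2 * fracHeatKernel n s (x - p.1) (t - p.2))) →
      (∀ x t, v x t = ∫ p : Euc n × ℝ,
          f p.1 p.2 * fracHeatKernel n s (x - p.1) (t - p.2)) →
      ∀ M : ℝ, (∀ x t, ‖x‖ < 2 → t ∈ Set.Ioo (0 : ℝ) 3 → |v x t| ≤ M) →
        ∀ x : Euc n, ‖x‖ < 1 →
          ∀ t t' : ℝ, t ∈ Set.Ioo (1 : ℝ) 2 → t' ∈ Set.Ioo (1 : ℝ) 2 →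
            |v x t - v x t'| ≤ C * M * |t - t'| ∧
            ∀ α ∈ Set.Ioo (0 : ℝ) 1, |v x t - v x t'| ≤ C * M * |t - t'| ^ α := by
  have hC := timeLipConst_pos n hs1
  refine ⟨timeLipConst n s, hC, ?_⟩
  intro f v _ hf0 hfQ hint hv M hM x hx t t' ht ht'
  have hx₂ : ‖x‖ < 2 := by linarith
  have hQ : Ioo (1 : ℝ) 2 ⊆ Ioo 0 3 := Ioo_subset_Ioo (by norm_num) (by norm_num)
  have hM₀ := hM x (5 / 2) hx₂ (by norm_num)
  have hlip : |v x t - v x t'| ≤ timeLipConst n s * M * |t - t'| :=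
    calc |v x t - v x t'| ≤ timeLipConst n s * |t - t'| * v x (5 / 2) := by
          rw [hv x t, hv x t', hv x (5 / 2)]
          exact abs_integral_sub_le_mul_integral (hint x t hx₂ (hQ ht))
            (hint x t' hx₂ (hQ ht')) (hint x (5 / 2) hx₂ (by norm_num))
            fun p => abs_mul_fracHeatKernel_sub_le hs1 hf0 hfQ hx ht ht' p.1 p.2
      _ ≤ timeLipConst n s * |t - t'| * M := by
          gcongr
          exact (le_abs_self _).trans hM₀
      _ = timeLipConst n s * M * |t - t'| := by ring
  refine ⟨hlip, fun α hα => hlip.trans ?_⟩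
  have : 0 ≤ M := (abs_nonneg _).trans hM₀
  gcongr
  exact self_le_rpow_of_le_one (abs_nonneg _)
    (abs_le.2 ⟨by linarith [ht.1, ht'.2], by linarith [ht.2, ht'.1]⟩) hα.2.le

/-- Homogeneous part, regularity in time: there is `C = C(n,s)` such that whenever `v` is the
homogeneous part (with `f ≥ 0` vanishing on `Q = B₂(0)×(0,3)`) and `|v| ≤ M` on `Q`, then for
every `x ∈ B₁(0)` and `t, t̄ ∈ (1,2)`, `|v(x,t) - v(x,t̄)| ≤ C M |t - t̄|`; in particular for
every `α ∈ (0,1)`, `|v(x,t) - v(x,t̄)| ≤ C M |t - t̄|^α`. -/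
theorem homogeneous_part_time_regularity
    (n : ℕ) (hn : 2 ≤ n) (s : ℝ) (hs0 : 0 < s) (hs1 : s < 1) :
    ∃ C : ℝ, 0 < C ∧ ∀ f v : Euc n → ℝ → ℝ,
      Measurable (Function.uncurry f) →
      (∀ y τ, 0 ≤ f y τ) →
      (∀ y τ, ‖y‖ < 2 → τ ∈ Set.Ioo (0 : ℝ) 3 → f y τ = 0) →
      (∀ x t, ‖x‖ < 2 → t ∈ Set.Ioo (0 : ℝ) 3 →
        Integrable (fun p : Euc n × ℝ =>
          f p.1 p.2 * fracHeatKernel n s (x - p.1) (t - p.2))) →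
      (∀ x t, v x t = ∫ p : Euc n × ℝ,
          f p.1 p.2 * fracHeatKernel n s (x - p.1) (t - p.2)) →
      ∀ M : ℝ, (∀ x t, ‖x‖ < 2 → t ∈ Set.Ioo (0 : ℝ) 3 → |v x t| ≤ M) →
        ∀ x : Euc n, ‖x‖ < 1 →
          ∀ t t' : ℝ, t ∈ Set.Ioo (1 : ℝ) 2 → t' ∈ Set.Ioo (1 : ℝ) 2 →
            |v x t - v x t'| ≤ C * M * |t - t'| ∧
            ∀ α ∈ Set.Ioo (0 : ℝ) 1, |v x t - v x t'| ≤ C * M * |t - t'| ^ α :=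
  homogeneous_part_time_regularity_general n s hs1

end
end
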